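/- arXiv:1312.2816 — 7 statements merged into one kernel-verified Lean document; each statement's English description precedes it below -/
import Mathlib

section
/- If G is a graph with degeneracy d and k ≥ d + 2, then any two proper k-colourings of G can be transformed into one another by recolouring one vertex at a time, with every intermediate colouring a proper k-colouring (i.e., G is k-mixing). -/
/-- `c` is a proper `k`-colouring of `G`. -/
def IsProperColoring {V : Type} (G : SimpleGraph V) {k : ℕ} (c : V → Fin k) : Prop :=
  ∀ ⦃u v : V⦄, G.Adj u v → c u ≠ c v

/-- A single-vertex recolouring step between proper `k`-colourings. -/
def RecolStep {V : Type} (G : SimpleGraph V) {k : ℕ} (c c' : V → Fin k) : Prop :=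
  IsProperColoring G c ∧ IsProperColoring G c' ∧
    ∃ v : V, c v ≠ c' v ∧ ∀ w : V, w ≠ v → c w = c' w

/-- `G` is `k`-mixing: any two proper `k`-colourings are connected by
single-vertex recolourings. -/
def IsMixing {V : Type} (G : SimpleGraph V) (k : ℕ) : Prop :=
  ∀ c c' : V → Fin k, IsProperColoring G c → IsProperColoring G c' →
    Relation.ReflTransGen (RecolStep G) c c'
/-- `G` is `d`-degenerate: every (induced sub)finset has a vertex with at most `d`
neighbours inside it. -/
def Degenerate {V : Type} [DecidableEq V] (G : SimpleGraph V) [DecidableRel G.Adj] (d : ℕ) : Prop :=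
  ∀ S : Finset V, S.Nonempty → ∃ v ∈ S, (S.filter (G.Adj v)).card ≤ d


/-! Induct on the number of vertices. Delete a vertex `v` with at most `d` neighbours and connect
the restrictions of the two colourings in `G - v`. Each step of that sequence lifts to `G`: the
only obstruction to recolouring a neighbour of `v` with `α` is `v` itself, and `v` can first be
moved to one of the `k - d - 1 ≥ 1` colours that avoid its neighbourhood and `α`. At the end the
lifted colouring differs from the target at most at `v`, which is then recoloured. -/

open Finset Relation

section

variable {V : Type} {G : SimpleGraph V} {k : ℕ}

theorem IsProperColoring.comap {W : Type} (f : W → V) {c : V → Fin k}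
    (hc : IsProperColoring G c) : IsProperColoring (G.comap f) (c ∘ f) :=
  fun _ _ h => hc h

theorem IsProperColoring.update [DecidableEq V] {c : V → Fin k} (hc : IsProperColoring G c)
    {x : V} {α : Fin k} (hα : ∀ u, G.Adj x u → c u ≠ α) :
    IsProperColoring G (Function.update c x α) := by
  intro a b hab
  rcases eq_or_ne a x with rfl | ha
  · rw [Function.update_self, Function.update_of_ne (G.ne_of_adj hab).symm]
    exact (hα b hab).symm
  rcases eq_or_ne b x with rfl | hb
  · rw [Function.update_self, Function.update_of_ne ha]
    exact hα a hab.symm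
  · rw [Function.update_of_ne ha, Function.update_of_ne hb]
    exact hc hab

theorem IsProperColoring.of_reflTransGen {c c' : V → Fin k} (hc : IsProperColoring G c)
    (h : ReflTransGen (RecolStep G) c c') : IsProperColoring G c' := by
  rcases h.cases_tail with rfl | ⟨_, _, hstep⟩
  exacts [hc, hstep.2.1]

theorem reflTransGen_recolStep_update [DecidableEq V] {c : V → Fin k}
    (hc : IsProperColoring G c) {x : V} {α : Fin k} (hα : ∀ u, G.Adj x u → c u ≠ α) :
    ReflTransGen (RecolStep G) c (Function.update c x α) := by
  by_cases hx : c x = α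
  · rw [← hx, Function.update_eq_self]
  · exact .single ⟨hc, hc.update hα, x, by simpa using hx,
      fun w hw => (Function.update_of_ne hw _ _).symm⟩

theorem exists_reflTransGen_update_of_degree_add_two_le [Fintype V] [DecidableEq V]
    [DecidableRel G.Adj] {v w : V} (hk : G.degree v + 2 ≤ k) {c : V → Fin k}
    (hc : IsProperColoring G c) {α : Fin k} (hα : ∀ u, u ≠ v → G.Adj w u → c u ≠ α) :
    ∃ c', ReflTransGen (RecolStep G) c c' ∧ ∀ u, u ≠ v → c' u = Function.update c w α u := by
  obtain ⟨β, -, hβ⟩ := exists_mem_notMem_of_card_lt_card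
    (s := insert α ((G.neighborFinset v).image c)) (t := univ) <| calc
      _ ≤ #((G.neighborFinset v).image c) + 1 := card_insert_le _ _
      _ ≤ G.degree v + 1 := by grw [card_image_le, G.card_neighborFinset_eq_degree]
      _ < #(univ : Finset (Fin k)) := by rw [card_univ, Fintype.card_fin]; omega
  simp only [mem_insert, mem_image, SimpleGraph.mem_neighborFinset, not_or, not_exists,
    not_and] at hβ
  obtain ⟨hβα, hβ⟩ := hβ
  set c₁ := Function.update c v β
  have hc₁ : IsProperColoring G c₁ := hc.update hβ
  have hα₁ : ∀ u, G.Adj w u → c₁ u ≠ α := by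
    intro u hwu
    rcases eq_or_ne u v with rfl | huv
    · simpa [c₁] using hβα
    · simpa [c₁, huv] using hα u huv hwu
  refine ⟨Function.update c₁ w α,
    (reflTransGen_recolStep_update hc hβ).trans (reflTransGen_recolStep_update hc₁ hα₁),
    fun u huv => ?_⟩
  rcases eq_or_ne u w with rfl | huw
  · simp
  · simp [c₁, huw, huv]

section DeleteVertex

variable [Fintype V] [DecidableEq V] [DecidableRel G.Adj] {v : V}

theorem exists_reflTransGen_comp_val_of_recolStep (hk : G.degree v + 2 ≤ k)
    {b b' : {w // w ≠ v} → Fin k} (hstep : RecolStep (G.comap Subtype.val) b b')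
    {c : V → Fin k} (hc : IsProperColoring G c) (hcb : c ∘ Subtype.val = b) :
    ∃ c', ReflTransGen (RecolStep G) c c' ∧ c' ∘ Subtype.val = b' := by
  obtain ⟨-, hb', w, -, hbw⟩ := hstep
  have hα : ∀ u, u ≠ v → G.Adj w u → c u ≠ b' w := by
    intro u huv hwu
    have hu : c u = b' ⟨u, huv⟩ := by
      rw [← hbw _ fun h => G.ne_of_adj hwu (congrArg Subtype.val h).symm, ← hcb]
      rfl
    exact hu ▸ (hb' (u := w) (v := ⟨u, huv⟩) hwu).symm
  obtain ⟨c', hcc', hc'⟩ := exists_reflTransGen_update_of_degree_add_two_le hk hc hα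
  refine ⟨c', hcc', funext fun u => ?_⟩
  rw [Function.comp_apply, hc' u u.2]
  rcases eq_or_ne u w with rfl | huw
  · simp
  · rw [Function.update_of_ne (Subtype.val_injective.ne huw), ← hbw u huw, ← hcb]
    rfl

theorem exists_reflTransGen_comp_val_of_reflTransGen (hk : G.degree v + 2 ≤ k)
    {b b' : {w // w ≠ v} → Fin k} (h : ReflTransGen (RecolStep (G.comap Subtype.val)) b b')
    {c : V → Fin k} (hc : IsProperColoring G c) (hcb : c ∘ Subtype.val = b) :
    ∃ c', ReflTransGen (RecolStep G) c c' ∧ c' ∘ Subtype.val = b' := by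
  induction h generalizing c with
  | refl => exact ⟨c, .refl, hcb⟩
  | tail _ hstep ih =>
    obtain ⟨c₁, hcc₁, hc₁⟩ := ih hc hcb
    obtain ⟨c₂, hc₁c₂, hc₂⟩ :=
      exists_reflTransGen_comp_val_of_recolStep hk hstep (hc.of_reflTransGen hcc₁) hc₁
    exact ⟨c₂, hcc₁.trans hc₁c₂, hc₂⟩

theorem IsMixing.of_comap_val_ne (hk : G.degree v + 2 ≤ k)
    (hmix : IsMixing (G.comap (Subtype.val : {w // w ≠ v} → V)) k) : IsMixing G k := by
  intro c c' hc hc'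
  obtain ⟨c'', hcc'', hc''⟩ := exists_reflTransGen_comp_val_of_reflTransGen hk
    (hmix _ _ (hc.comap _) (hc'.comap _)) hc rfl
  have hagree : ∀ u, u ≠ v → c'' u = c' u := fun u hu => congrFun hc'' ⟨u, hu⟩
  have hv : ∀ u, G.Adj v u → c'' u ≠ c' v := fun u hvu =>
    hagree u (G.ne_of_adj hvu).symm ▸ (hc' hvu).symm
  convert hcc''.trans (reflTransGen_recolStep_update (hc.of_reflTransGen hcc'') hv)
  funext u
  rcases eq_or_ne u v with rfl | huv
  · simp
  · simp [huv, hagree u huv]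

end DeleteVertex

theorem Degenerate.comap {W : Type} [DecidableEq V] [DecidableRel G.Adj] [DecidableEq W]
    {d : ℕ} (hG : Degenerate G d) (f : W ↪ V) : Degenerate (G.comap f) d := by
  intro S hS
  obtain ⟨_, hfu, hcard⟩ := hG (S.map f) hS.map
  obtain ⟨u, hu, rfl⟩ := mem_map.mp hfu
  refine ⟨u, hu, ?_⟩
  rwa [filter_map, card_map] at hcard

theorem Degenerate.isMixing [Fintype V] [DecidableEq V] [DecidableRel G.Adj] {d : ℕ}
    (hG : Degenerate G d) (hk : d + 2 ≤ k) : IsMixing G k := by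
  induction h : Fintype.card V using Nat.strong_induction_on generalizing V with
  | _ n ih =>
    rcases isEmpty_or_nonempty V with _ | ⟨⟨v₀⟩⟩
    · intro c c' _ _
      rw [Subsingleton.elim c c']
    obtain ⟨v, -, hv⟩ := hG univ ⟨v₀, mem_univ v₀⟩
    rw [← SimpleGraph.neighborFinset_eq_filter, SimpleGraph.card_neighborFinset_eq_degree] at hv
    refine IsMixing.of_comap_val_ne (v := v) (by omega) ?_
    exact ih _ (h ▸ Fintype.card_subtype_lt (x := v) (by simp))
      (hG.comap (.subtype _)) rfl

end

/-- If `G` has degeneracy at most `d` and `k ≥ d + 2`, then `G` is `k`-mixing. -/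
theorem degeneracy_implies_mixing {V : Type} [Fintype V] [DecidableEq V]
    (G : SimpleGraph V) [DecidableRel G.Adj] (d k : ℕ)
    (hdeg : Degenerate G d) (hk : d + 2 ≤ k) : IsMixing G k :=
  hdeg.isMixing hk
end

section
/- If G is a connected bipartite graph, then for every k ≥ 2, any two proper k-colourings of G can be transformed into one another by a sequence of Kempe chain recolourings. -/
/-- Swap colours `a` and `b` on the set `S`. -/
noncomputable def kempeSwap {V : Type} {k : ℕ} (c : V → Fin k) (a b : Fin k) (S : Set V) :
    V → Fin k := by
  classical
  exact fun v => if v ∈ S then (if c v = a then b else if c v = b then a else c v) else c v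

/-- `S` is a Kempe chain of the colouring `c` for colours `a`, `b`: a connected
component of the subgraph induced on the vertices coloured `a` or `b`. -/
def IsKempeChain {V : Type} (G : SimpleGraph V) {k : ℕ} (c : V → Fin k) (a b : Fin k)
    (S : Set V) : Prop :=
  ∃ v₀ : V, (c v₀ = a ∨ c v₀ = b) ∧
    S = {v | Relation.ReflTransGen
          (fun x y => (c x = a ∨ c x = b) ∧ (c y = a ∨ c y = b) ∧ G.Adj x y) v₀ v}

/-- A Kempe chain recolouring step between proper `k`-colourings. -/
def KempeStep {V : Type} (G : SimpleGraph V) {k : ℕ} (c c' : V → Fin k) : Prop :=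
  IsProperColoring G c ∧ IsProperColoring G c' ∧
    ∃ (a b : Fin k) (S : Set V), a ≠ b ∧ IsKempeChain G c a b S ∧ c' = kempeSwap c a b S

/-- `G` is `k`-Kempe-mixing. -/
def IsKempeMixing {V : Type} (G : SimpleGraph V) (k : ℕ) : Prop :=
  ∀ c c' : V → Fin k, IsProperColoring G c → IsProperColoring G c' →
    Relation.ReflTransGen (KempeStep G) c c'

/-!
Fix a proper colouring `d` of `G` that uses only two colours `p, q` (a bipartition, when `k ≥ 2`).
If a proper colouring `c` differs from `d` at `v`, swap the Kempe chain `K` of `c` at `v` for the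
colours `c v` and `d v`. Along `K` both `c` and `d` alternate between two values, so `c x = c v`
exactly when `d x = d v` for `x ∈ K`. Hence every vertex of `K` coloured `c v` receives its
`d`-colour, the vertices of `K` coloured `d v` already disagreed with `d`, and `v` is repaired:
the set where `c` and `d` disagree strictly shrinks. So every proper colouring reaches `d`, and
Kempe steps are reversible.
-/

variable {V : Type} {k : ℕ} {G : SimpleGraph V}

lemma eq_iff_ne_of_ne_of_eq_or_eq {α : Type*} {a b x y z : α} (hx : x = a ∨ x = b)
    (hy : y = a ∨ y = b) (hz : z = a ∨ z = b) (hxy : x ≠ y) : y = z ↔ x ≠ z := by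
  grind

section KempeSwap

variable {c : V → Fin k} {a b : Fin k} {S : Set V} {v : V}

lemma kempeSwap_of_mem (hv : v ∈ S) : kempeSwap c a b S v = Equiv.swap a b (c v) := by
  simp [kempeSwap, hv, Equiv.swap_apply_def]

lemma kempeSwap_of_notMem (hv : v ∉ S) : kempeSwap c a b S v = c v := by
  simp [kempeSwap, hv]

@[simp]
lemma kempeSwap_kempeSwap : kempeSwap (kempeSwap c a b S) a b S = c := by
  funext v
  by_cases hv : v ∈ S
  · rw [kempeSwap_of_mem hv, kempeSwap_of_mem hv, Equiv.swap_apply_self]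
  · rw [kempeSwap_of_notMem hv, kempeSwap_of_notMem hv]

lemma kempeSwap_eq_or_eq_iff :
    (kempeSwap c a b S v = a ∨ kempeSwap c a b S v = b) ↔ (c v = a ∨ c v = b) := by
  by_cases hv : v ∈ S
  · rw [kempeSwap_of_mem hv, Equiv.swap_apply_eq_iff, Equiv.swap_apply_eq_iff,
      Equiv.swap_apply_left, Equiv.swap_apply_right, or_comm]
  · rw [kempeSwap_of_notMem hv]

end KempeSwap

def KempeAdj (G : SimpleGraph V) (c : V → Fin k) (a b : Fin k) (x y : V) : Prop :=
  (c x = a ∨ c x = b) ∧ (c y = a ∨ c y = b) ∧ G.Adj x y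

def kempeChainAt (G : SimpleGraph V) (c : V → Fin k) (a b : Fin k) (v : V) : Set V :=
  {w | Relation.ReflTransGen (KempeAdj G c a b) v w}

section KempeChain

variable {c d : V → Fin k} {a b p q : Fin k} {S : Set V} {v w : V}

lemma isKempeChain_kempeChainAt (hv : c v = a ∨ c v = b) :
    IsKempeChain G c a b (kempeChainAt G c a b v) :=
  ⟨v, hv, rfl⟩

lemma eq_or_eq_of_mem_kempeChainAt (hv : c v = a ∨ c v = b)
    (hw : w ∈ kempeChainAt G c a b v) : c w = a ∨ c w = b := by
  induction hw with
  | refl => exact hv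
  | tail _ hxy => exact hxy.2.1

@[simp]
lemma kempeAdj_kempeSwap : KempeAdj G (kempeSwap c a b S) a b = KempeAdj G c a b := by
  funext x y
  simp only [KempeAdj, kempeSwap_eq_or_eq_iff]

lemma kempeChainAt_kempeSwap :
    kempeChainAt G (kempeSwap c a b S) a b v = kempeChainAt G c a b v := by
  simp only [kempeChainAt, kempeAdj_kempeSwap]

lemma IsProperColoring.kempeSwap (hc : IsProperColoring G c) (hS : IsKempeChain G c a b S) :
    IsProperColoring G (kempeSwap c a b S) := by
  obtain ⟨v, hv, rfl⟩ : ∃ v, (c v = a ∨ c v = b) ∧ S = kempeChainAt G c a b v := hS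
  set K := kempeChainAt G c a b v
  -- a neighbour of `K` outside `K` has a colour other than `a`, `b`, which the swap fixes
  have boundary : ∀ {u w}, u ∈ K → w ∉ K → G.Adj u w → Equiv.swap a b (c u) ≠ c w := by
    intro u w hu hw huw
    obtain ⟨hwa, hwb⟩ : c w ≠ a ∧ c w ≠ b := not_or.mp fun h =>
      hw (hu.tail ⟨eq_or_eq_of_mem_kempeChainAt hv hu, h, huw⟩)
    rw [← Equiv.swap_apply_of_ne_of_ne hwa hwb]
    exact (Equiv.injective _).ne (hc huw)
  intro u w huw
  by_cases hu : u ∈ K <;> by_cases hw : w ∈ K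
  · rw [kempeSwap_of_mem hu, kempeSwap_of_mem hw]
    exact (Equiv.injective _).ne (hc huw)
  · rw [kempeSwap_of_mem hu, kempeSwap_of_notMem hw]
    exact boundary hu hw huw
  · rw [kempeSwap_of_notMem hu, kempeSwap_of_mem hw]
    exact (boundary hw hu huw.symm).symm
  · rw [kempeSwap_of_notMem hu, kempeSwap_of_notMem hw]
    exact hc huw

lemma KempeStep.symm {c c' : V → Fin k} (h : KempeStep G c c') : KempeStep G c' c := by
  obtain ⟨hc, hc', a, b, S, hab, ⟨v, hv, rfl⟩, rfl⟩ := h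
  refine ⟨hc', hc, a, b, _, hab, ⟨v, kempeSwap_eq_or_eq_iff.mpr hv, ?_⟩, kempeSwap_kempeSwap.symm⟩
  exact kempeChainAt_kempeSwap.symm

instance : Std.Symm (KempeStep G (k := k)) :=
  ⟨fun _ _ => KempeStep.symm⟩

lemma eq_iff_eq_of_mem_kempeChainAt (hc : IsProperColoring G c) (hd : IsProperColoring G d)
    (hpq : ∀ x, d x = p ∨ d x = q) (hv : c v = a ∨ c v = b)
    (hw : w ∈ kempeChainAt G c a b v) : c w = c v ↔ d w = d v := by
  induction hw with
  | refl => exact ⟨fun _ => rfl, fun _ => rfl⟩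
  | @tail x y hx hxy ih =>
    obtain ⟨hcx, hcy, hadj⟩ := hxy
    rw [eq_iff_ne_of_ne_of_eq_or_eq hcx hcy hv (hc hadj),
      eq_iff_ne_of_ne_of_eq_or_eq (hpq x) (hpq y) (hpq v) (hd hadj)]
    exact not_congr ih

lemma exists_kempeStep_ssubset (hc : IsProperColoring G c) (hd : IsProperColoring G d)
    (hpq : ∀ x, d x = p ∨ d x = q) (hcd : c ≠ d) :
    ∃ c', KempeStep G c c' ∧ {x | c' x ≠ d x} ⊂ {x | c x ≠ d x} := by
  obtain ⟨v, hv⟩ := Function.ne_iff.mp hcd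
  set K := kempeChainAt G c (c v) (d v) v
  have hK : IsKempeChain G c (c v) (d v) K := isKempeChain_kempeChainAt (.inl rfl)
  refine ⟨kempeSwap c (c v) (d v) K, ⟨hc, hc.kempeSwap hK, _, _, K, hv, hK, rfl⟩, ?_⟩
  have hsub : {x | kempeSwap c (c v) (d v) K x ≠ d x} ⊆ {x | c x ≠ d x} := by
    intro x hx
    by_cases hxK : x ∈ K
    · have hdx := eq_iff_eq_of_mem_kempeChainAt hc hd hpq (.inl rfl) hxK
      rcases eq_or_eq_of_mem_kempeChainAt (.inl rfl) hxK with hcx | hcx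
      · exact (hx (by rw [kempeSwap_of_mem hxK, hcx, Equiv.swap_apply_left, hdx.mp hcx])).elim
      · exact fun h => hv ((hdx.mpr (h.symm.trans hcx)).symm.trans hcx)
    · rwa [Set.mem_ofPred_eq, kempeSwap_of_notMem hxK] at hx
  refine Set.ssubset_iff_subset_ne.mpr ⟨hsub, fun h => ?_⟩
  have : v ∈ {x | kempeSwap c (c v) (d v) K x ≠ d x} := h ▸ hv
  exact this (by rw [kempeSwap_of_mem (show v ∈ K from .refl), Equiv.swap_apply_left])

lemma reflTransGen_kempeStep_of_eq_or_eq [Finite V] (hd : IsProperColoring G d)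
    (hpq : ∀ x, d x = p ∨ d x = q) (hc : IsProperColoring G c) :
    Relation.ReflTransGen (KempeStep G) c d := by
  induction hn : {x | c x ≠ d x}.ncard using Nat.strong_induction_on generalizing c with
  | _ n ih =>
    obtain rfl | hcd := eq_or_ne c d
    · rfl
    obtain ⟨c', hstep, hlt⟩ := exists_kempeStep_ssubset hc hd hpq hcd
    exact .head hstep (ih _ (hn ▸ Set.ncard_lt_ncard hlt) hstep.2.1 rfl)

theorem isKempeMixing_of_eq_or_eq [Finite V] (hd : IsProperColoring G d)
    (hpq : ∀ x, d x = p ∨ d x = q) : IsKempeMixing G k := fun _ _ hc hc' =>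
  (reflTransGen_kempeStep_of_eq_or_eq hd hpq hc).trans
    (symm (reflTransGen_kempeStep_of_eq_or_eq hd hpq hc'))

end KempeChain

theorem bipartite_kempe_mixing_general {V : Type} [Fintype V] (G : SimpleGraph V)
    (hbip : G.Colorable 2) (k : ℕ) (hk : 2 ≤ k) :
    IsKempeMixing G k := by
  obtain ⟨φ⟩ := hbip
  refine isKempeMixing_of_eq_or_eq (d := fun x => Fin.castLE hk (φ x))
    (p := Fin.castLE hk 0) (q := Fin.castLE hk 1)
    (fun _ _ huv h => φ.valid huv (Fin.castLE_injective hk h)) fun x => ?_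
  simp only [Fin.ext_iff, Fin.val_castLE]
  omega

/-- Every connected bipartite graph is `k`-Kempe-mixing for every `k ≥ 2`. -/
theorem bipartite_kempe_mixing {V : Type} [Fintype V] (G : SimpleGraph V)
    (hconn : G.Connected) (hbip : G.Colorable 2) (k : ℕ) (hk : 2 ≤ k) :
    IsKempeMixing G k :=
  bipartite_kempe_mixing_general G hbip k hk
end

section
/- The 3-prism K_3 □ K_2 is not 3-Kempe-mixing: there exist two proper 3-colourings of the 3-prism such that no sequence of Kempe chain recolourings transforms one into the other. -/
/-- The 3-prism `K₃ □ K₂`. -/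
def prismGraph : SimpleGraph (Fin 3 × Fin 2) :=
  (SimpleGraph.completeGraph (Fin 3)).boxProd (SimpleGraph.completeGraph (Fin 2))

/-!
In a proper 3-colouring `d` of the prism the top triangle is coloured like the bottom one
rotated by some `s ≠ 0`: `d (i, 1) = d (i + s, 0)`. The equally coloured vertices `(i, 1)` and
`(i + s, 0)` have common neighbours `(i, 0)` and `(i + s, 1)` carrying the two other colours, so
every Kempe chain containing one of them contains the other. Hence Kempe swaps preserve the
rotation `s`, and the colourings with `s = 1` and `s = 2` are not Kempe equivalent.
-/

section Kempe

variable {V : Type} {G : SimpleGraph V} {k : ℕ} {c : V → Fin k} {a b : Fin k} {S : Set V}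

lemma IsKempeChain.mem_iff_of_adj (hS : IsKempeChain G c a b S) {x y : V}
    (hx : c x = a ∨ c x = b) (hy : c y = a ∨ c y = b) (hxy : G.Adj x y) : x ∈ S ↔ y ∈ S := by
  obtain ⟨v₀, -, rfl⟩ := hS
  exact ⟨fun h => h.tail ⟨hx, hy, hxy⟩, fun h => h.tail ⟨hy, hx, hxy.symm⟩⟩

lemma kempeSwap_apply_eq_of_mem_iff {u w : V} (huw : c u = c w) (hS : u ∈ S ↔ w ∈ S) :
    kempeSwap c a b S u = kempeSwap c a b S w := by
  classical
  simp only [kempeSwap, huw]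
  exact if_congr hS rfl rfl

lemma kempeSwap_apply_of_ne {u : V} (ha : c u ≠ a) (hb : c u ≠ b) :
    kempeSwap c a b S u = c u := by
  simp [kempeSwap, ha, hb]

/-- If the common colour of `u` and `w` is swapped, a common neighbour of the other swapped
colour joins them inside the Kempe chain. -/
lemma IsKempeChain.kempeSwap_apply_eq (hab : a ≠ b) (hS : IsKempeChain G c a b S) {u w : V}
    (huw : c u = c w) (hcommon : ∀ e, e ≠ c u → ∃ m, G.Adj u m ∧ G.Adj m w ∧ c m = e) :
    kempeSwap c a b S u = kempeSwap c a b S w := by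
  have through (e : Fin k) (he : e = a ∨ e = b) (hne : e ≠ c u) (hu : c u = a ∨ c u = b) :
      u ∈ S ↔ w ∈ S := by
    obtain ⟨m, hum, hmw, rfl⟩ := hcommon e hne
    exact (hS.mem_iff_of_adj hu he hum).trans (hS.mem_iff_of_adj he (huw ▸ hu) hmw)
  by_cases ha : c u = a
  · exact kempeSwap_apply_eq_of_mem_iff huw
      (through b (Or.inr rfl) (by rw [ha]; exact hab.symm) (Or.inl ha))
  by_cases hb : c u = b
  · exact kempeSwap_apply_eq_of_mem_iff huw
      (through a (Or.inl rfl) (by rw [hb]; exact hab) (Or.inr hb))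
  rw [kempeSwap_apply_of_ne ha hb, kempeSwap_apply_of_ne (huw ▸ ha) (huw ▸ hb), huw]

end Kempe

namespace prismGraph

lemma adj_iff {u v : Fin 3 × Fin 2} :
    prismGraph.Adj u v ↔ u.1 ≠ v.1 ∧ u.2 = v.2 ∨ u.2 ≠ v.2 ∧ u.1 = v.1 := by
  simp [prismGraph, SimpleGraph.boxProd_adj]

instance : DecidableRel prismGraph.Adj := fun _ _ => decidable_of_iff _ adj_iff.symm

lemma surjective_bottom {d : Fin 3 × Fin 2 → Fin 3} (hd : IsProperColoring prismGraph d) :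
    Function.Surjective fun i => d (i, 0) :=
  Finite.injective_iff_surjective.mp fun i j hij => by
    by_contra hne
    exact @hd (i, 0) (j, 0) (adj_iff.mpr (Or.inl ⟨hne, rfl⟩)) hij

end prismGraph

def IsRotatedBy (s : Fin 3) (d : Fin 3 × Fin 2 → Fin 3) : Prop :=
  ∀ i, d (i, 1) = d (i + s, 0)

lemma KempeStep.isRotatedBy {s : Fin 3} (hs : s ≠ 0) {d d' : Fin 3 × Fin 2 → Fin 3}
    (h : KempeStep prismGraph d d') (hd : IsRotatedBy s d) : IsRotatedBy s d' := by
  obtain ⟨hproper, -, a, b, S, hab, hS, rfl⟩ := h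
  intro i
  refine hS.kempeSwap_apply_eq hab (hd i) fun e he => ?_
  obtain ⟨j, rfl⟩ := prismGraph.surjective_bottom hproper e
  have hj : j ≠ i + s := fun h => he (by rw [hd i, h])
  have fin3 : ∀ s i j : Fin 3, s ≠ 0 → j ≠ i + s → j = i ∨ j = i + s + s := by decide
  rcases fin3 s i j hs hj with rfl | rfl
  · exact ⟨(j, 0), by simp [prismGraph.adj_iff], by simp [prismGraph.adj_iff, hs], rfl⟩
  · exact ⟨(i + s, 1), by simp [prismGraph.adj_iff, hs], by simp [prismGraph.adj_iff], hd _⟩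

lemma isRotatedBy_of_reflTransGen {s : Fin 3} (hs : s ≠ 0) {d d' : Fin 3 × Fin 2 → Fin 3}
    (h : Relation.ReflTransGen (KempeStep prismGraph) d d') (hd : IsRotatedBy s d) :
    IsRotatedBy s d' := by
  induction h with
  | refl => exact hd
  | tail _ hstep ih => exact hstep.isRotatedBy hs ih

def rotatedColoring (s : Fin 3) (p : Fin 3 × Fin 2) : Fin 3 :=
  if p.2 = 0 then p.1 else p.1 + s

lemma rotatedColoring_isRotatedBy (s : Fin 3) : IsRotatedBy s (rotatedColoring s) := by
  intro i
  simp [rotatedColoring]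

lemma isProperColoring_rotatedColoring {s : Fin 3} (hs : s ≠ 0) :
    IsProperColoring prismGraph (rotatedColoring s) := by
  unfold IsProperColoring
  revert s
  decide

/-- The 3-prism is not 3-Kempe-mixing. -/
theorem prism_not_three_kempe_mixing :
    ∃ c c' : Fin 3 × Fin 2 → Fin 3, IsProperColoring prismGraph c ∧
      IsProperColoring prismGraph c' ∧
      ¬ Relation.ReflTransGen (KempeStep prismGraph) c c' := by
  refine ⟨rotatedColoring 1, rotatedColoring 2, isProperColoring_rotatedColoring one_ne_zero,
    isProperColoring_rotatedColoring (by decide), fun h => ?_⟩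
  have hrot := isRotatedBy_of_reflTransGen one_ne_zero h (rotatedColoring_isRotatedBy 1)
  exact absurd (hrot 0) (by decide)
end

section
/- Let G be a connected graph on n vertices and let α, β be two placements of k identical tokens on distinct vertices of G (i.e., two k-subsets U and V of vertices). Then the minimum number of single-token moves along edges needed to transform α into β (where at most one token occupies each vertex at all times, but no stability constraint) equals the minimum over all bijections σ : U → V of the sum over u ∈ U of the graph distance from u to σ(u). -/
/-- A single token move: a token slides from `u` along an edge to an unoccupied
vertex `v`. -/
def TokenMove {V : Type} [DecidableEq V] (G : SimpleGraph V) (U U' : Finset V) : Prop :=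
  ∃ u v : V, u ∈ U ∧ v ∉ U ∧ G.Adj u v ∧ U' = insert v (U.erase u)
/-- `ReachN R n a b`: `b` is reachable from `a` in exactly `n` `R`-steps. -/
def ReachN {α : Type*} (R : α → α → Prop) : ℕ → α → α → Prop
  | 0, a, b => a = b
  | n + 1, a, c => ∃ b, R a b ∧ ReachN R n b c

/-!
Write `c(U, W)` for the minimum total distance of a bijection `U ≃ W`. Sliding one token
along an edge changes `c` by at most one (triangle inequality), so every move sequence from
`U` to `W` has length at least `c(U, W)`. Conversely, while `U ≠ W` some target `t ∈ W` is
unoccupied; follow a geodesic from the token matched to `t`. If its next vertex is free the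
token moves there and the cost drops by one. If it is occupied, hand the target `t` to the
blocking token: by the triangle inequality this does not increase the cost, and the new
token is one step closer to `t`. Hence some move lowers `c` by exactly one.
-/

namespace Finset

theorem sum_add_sum_eq_of_eqOn_compl {ι M : Type*} [Fintype ι] [DecidableEq ι]
    [AddCommMonoid M] (s : Finset ι) {f g : ι → M} (hfg : ∀ i ∉ s, f i = g i) :
    ∑ i, f i + ∑ i ∈ s, g i = ∑ i, g i + ∑ i ∈ s, f i := by
  rw [← sum_compl_add_sum s f, ← sum_compl_add_sum s g,
    sum_congr rfl fun i hi => hfg i (mem_compl.1 hi), add_assoc, add_assoc,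
    add_comm (∑ i ∈ s, f i)]

end Finset

namespace SimpleGraph

theorem Connected.exists_adj_dist_add_one_eq {V : Type*} {G : SimpleGraph V} (hG : G.Connected)
    {u t : V} (h : u ≠ t) : ∃ w, G.Adj u w ∧ G.dist w t + 1 = G.dist u t := by
  obtain ⟨p, hp⟩ := hG.exists_walk_length_eq_dist u t
  cases p with
  | nil => exact absurd rfl h
  | @cons _ w _ hadj q =>
    refine ⟨w, hadj, le_antisymm ?_ ?_⟩
    · simpa [← hp] using dist_le q
    · have := hG.dist_triangle (u := u) (v := w) (w := t)
      rw [dist_eq_one_iff_adj.2 hadj] at this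
      omega

end SimpleGraph

namespace TokenSliding

open Finset

variable {V : Type} (G : SimpleGraph V)

noncomputable def matchingCost {U W : Finset V} (σ : U ≃ W) : ℕ :=
  ∑ u : U, G.dist u (σ u)

noncomputable def minMatchingCost (U W : Finset V) : ℕ :=
  sInf {m | ∃ σ : U ≃ W, m = matchingCost G σ}

theorem minMatchingCost_le {U W : Finset V} (σ : U ≃ W) :
    minMatchingCost G U W ≤ matchingCost G σ :=
  Nat.sInf_le ⟨σ, rfl⟩

theorem exists_matchingCost_eq_minMatchingCost {U W : Finset V} (h : U.card = W.card) :
    ∃ σ : U ≃ W, matchingCost G σ = minMatchingCost G U W := by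
  obtain ⟨σ, hσ⟩ := Nat.sInf_mem (s := {m | ∃ σ : U ≃ W, m = matchingCost G σ})
    ⟨_, Fintype.equivOfCardEq (by simp [h]), rfl⟩
  exact ⟨σ, hσ.symm⟩

theorem minMatchingCost_self (U : Finset V) : minMatchingCost G U U = 0 :=
  Nat.eq_zero_of_le_zero <| (minMatchingCost_le G (Equiv.refl U)).trans_eq <|
    sum_eq_zero fun _ _ => SimpleGraph.dist_self

theorem eq_of_minMatchingCost_eq_zero (hG : G.Connected) {U W : Finset V}
    (hc : U.card = W.card) (h : minMatchingCost G U W = 0) : U = W := by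
  obtain ⟨σ, hσ⟩ := exists_matchingCost_eq_minMatchingCost G hc
  refine eq_of_subset_of_card_le (fun x hx => ?_) hc.ge
  have : G.dist x (σ ⟨x, hx⟩) = 0 := (sum_eq_zero_iff.1 (hσ.trans h)) ⟨x, hx⟩ (mem_univ _)
  rw [hG.dist_eq_zero_iff.1 this]
  exact (σ ⟨x, hx⟩).2

variable [DecidableEq V]

theorem card_eq_of_tokenMove {U U' : Finset V} (h : TokenMove G U U') :
    U'.card = U.card := by
  obtain ⟨u, v, hu, hv, -, rfl⟩ := h
  rw [card_insert_of_notMem fun h => hv (mem_of_mem_erase h), card_erase_add_one hu]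

def slideEquiv {U : Finset V} {u v : V} (hu : u ∈ U) (hv : v ∉ U) :
    U ≃ (insert v (U.erase u) : Finset V) :=
  (Equiv.swap u v).subtypeEquiv fun a => by
    have huv : u ≠ v := fun h => hv (h ▸ hu)
    rcases eq_or_ne a u with rfl | hau
    · simp [hu]
    rcases eq_or_ne a v with rfl | hav
    · simp [hv, huv]
    · simp [Equiv.swap_apply_of_ne_of_ne hau hav, hau, hav]

theorem slideEquiv_apply_of_ne {U : Finset V} {u v : V} (hu : u ∈ U) (hv : v ∉ U) {x : U}
    (hx : x ≠ ⟨u, hu⟩) : (slideEquiv hu hv x : V) = x :=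
  Equiv.swap_apply_of_ne_of_ne (fun h => hx (Subtype.ext h)) fun h => hv (h ▸ x.2)

theorem matchingCost_slideEquiv_trans {U W : Finset V} {u v : V} (hu : u ∈ U) (hv : v ∉ U)
    (σ : (insert v (U.erase u) : Finset V) ≃ W) :
    matchingCost G ((slideEquiv hu hv).trans σ) + G.dist v (σ (slideEquiv hu hv ⟨u, hu⟩)) =
      matchingCost G σ + G.dist u (σ (slideEquiv hu hv ⟨u, hu⟩)) := by
  have hv' : (slideEquiv hu hv ⟨u, hu⟩ : V) = v := Equiv.swap_apply_left u v
  have key := sum_add_sum_eq_of_eqOn_compl ({⟨u, hu⟩} : Finset U)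
    (f := fun x : U => G.dist x (σ (slideEquiv hu hv x)))
    (g := fun x : U => G.dist (slideEquiv hu hv x) (σ (slideEquiv hu hv x)))
    fun x hx => by rw [slideEquiv_apply_of_ne hu hv (notMem_singleton.1 hx)]
  rw [Equiv.sum_comp (slideEquiv hu hv) fun y : (insert v (U.erase u) : Finset V) =>
    G.dist y (σ y), sum_singleton, sum_singleton, hv'] at key
  exact key

theorem matchingCost_swap_trans {U W : Finset V} (σ : U ≃ W) {a b : U} (hab : a ≠ b) :
    matchingCost G ((Equiv.swap a b).trans σ) + (G.dist a (σ a) + G.dist b (σ b)) =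
      matchingCost G σ + (G.dist a (σ b) + G.dist b (σ a)) := by
  have key := sum_add_sum_eq_of_eqOn_compl {a, b}
    (f := fun x : U => G.dist x (σ (Equiv.swap a b x))) (g := fun x : U => G.dist x (σ x))
    fun x hx => by
      simp only [mem_insert, mem_singleton, not_or] at hx
      rw [Equiv.swap_apply_of_ne_of_ne hx.1 hx.2]
  simpa [matchingCost, sum_pair hab] using key

theorem minMatchingCost_le_add_one_of_tokenMove (hG : G.Connected) {U U' W : Finset V}
    (hm : TokenMove G U U') (hc : U'.card = W.card) :
    minMatchingCost G U W ≤ minMatchingCost G U' W + 1 := by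
  obtain ⟨u, v, hu, hv, hadj, rfl⟩ := hm
  obtain ⟨σ, hσ⟩ := exists_matchingCost_eq_minMatchingCost G hc
  have hslide := matchingCost_slideEquiv_trans G hu hv σ
  have htri := hG.dist_triangle (u := u) (v := v) (w := σ (slideEquiv hu hv ⟨u, hu⟩))
  rw [SimpleGraph.dist_eq_one_iff_adj.2 hadj] at htri
  have := minMatchingCost_le G ((slideEquiv hu hv).trans σ)
  omega

theorem exists_tokenMove_add_one_le_matchingCost (hG : G.Connected) {U W : Finset V}
    (σ : U ≃ W) (x : U) (ht : (σ x : V) ∉ U) :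
    ∃ U', TokenMove G U U' ∧ minMatchingCost G U' W + 1 ≤ matchingCost G σ := by
  obtain ⟨w, hadj, hw⟩ := hG.exists_adj_dist_add_one_eq (t := σ x) fun h => ht (h ▸ x.2)
  by_cases hwU : w ∈ U
  · -- the blocking token on `w` takes over the target of `x`
    set y : U := ⟨w, hwU⟩
    have hxy : x ≠ y := fun h => hadj.ne (congrArg Subtype.val h)
    have hswap := matchingCost_swap_trans G σ hxy
    rw [show (y : V) = w from rfl] at hswap
    have htri := hG.dist_triangle (u := (x : V)) (v := w) (w := σ y)
    rw [SimpleGraph.dist_eq_one_iff_adj.2 hadj] at htri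
    have hτy : ((Equiv.swap x y).trans σ) y = σ x := by
      rw [Equiv.trans_apply, Equiv.swap_apply_right]
    have hcloser : G.dist w (σ x) < G.dist x (σ x) := by omega
    obtain ⟨U', hm, hle⟩ :=
      exists_tokenMove_add_one_le_matchingCost hG ((Equiv.swap x y).trans σ) y (hτy ▸ ht)
    exact ⟨U', hm, by omega⟩
  · refine ⟨_, ⟨x, w, x.2, hwU, hadj, rfl⟩, ?_⟩
    set σ' := (slideEquiv x.2 hwU).symm.trans σ
    have hσ' : (slideEquiv x.2 hwU).trans σ' = σ := by
      rw [← Equiv.trans_assoc, Equiv.self_trans_symm, Equiv.refl_trans]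
    have hslide := matchingCost_slideEquiv_trans G x.2 hwU σ'
    rw [hσ', show σ' (slideEquiv x.2 hwU x) = σ x by simp [σ']] at hslide
    have := minMatchingCost_le G σ'
    omega
termination_by G.dist x (σ x)

theorem exists_tokenMove_add_one_le_minMatchingCost (hG : G.Connected) {U W : Finset V}
    (hc : U.card = W.card) (hUW : U ≠ W) :
    ∃ U', TokenMove G U U' ∧ minMatchingCost G U' W + 1 ≤ minMatchingCost G U W := by
  obtain ⟨t, htW, htU⟩ : ∃ t ∈ W, t ∉ U := not_subset.1 fun h =>
    hUW (eq_of_subset_of_card_le h hc.le).symm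
  obtain ⟨σ, hσ⟩ := exists_matchingCost_eq_minMatchingCost G hc
  rw [← hσ]
  exact exists_tokenMove_add_one_le_matchingCost G hG σ (σ.symm ⟨t, htW⟩) (by simpa using htU)

theorem reachN_minMatchingCost (hG : G.Connected) {U W : Finset V} (hc : U.card = W.card) :
    ReachN (TokenMove G) (minMatchingCost G U W) U W := by
  induction h : minMatchingCost G U W generalizing U with
  | zero => exact eq_of_minMatchingCost_eq_zero G hG hc h
  | succ m ih =>
    have hUW : U ≠ W := by rintro rfl; simp [minMatchingCost_self] at h
    obtain ⟨U', hm, hle⟩ := exists_tokenMove_add_one_le_minMatchingCost G hG hc hUW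
    have hc' : U'.card = W.card := (card_eq_of_tokenMove G hm).trans hc
    have := minMatchingCost_le_add_one_of_tokenMove G hG hm hc'
    exact ⟨U', hm, ih hc' (by omega)⟩

theorem minMatchingCost_le_of_reachN (hG : G.Connected) {n : ℕ} {U W : Finset V}
    (hc : U.card = W.card) (h : ReachN (TokenMove G) n U W) : minMatchingCost G U W ≤ n := by
  induction n generalizing U with
  | zero => cases h; simp [minMatchingCost_self]
  | succ n ih =>
    obtain ⟨U', hm, h'⟩ := h
    have hc' : U'.card = W.card := (card_eq_of_tokenMove G hm).trans hc
    have := minMatchingCost_le_add_one_of_tokenMove G hG hm hc'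
    have := ih hc' h'
    omega

end TokenSliding

theorem token_moves_min_eq_min_matching_general {V : Type} [DecidableEq V]
    (G : SimpleGraph V) (hG : G.Connected) (k : ℕ) (U W : Finset V)
    (hU : U.card = k) (hW : W.card = k) :
    IsLeast {n : ℕ | ReachN (TokenMove G) n U W}
      (sInf {m : ℕ | ∃ σ : {x // x ∈ U} ≃ {x // x ∈ W},
        m = ∑ u : {x // x ∈ U}, G.dist u.1 (σ u).1}) := by
  have hc : U.card = W.card := hU.trans hW.symm
  exact ⟨TokenSliding.reachN_minMatchingCost G hG hc,
    fun _ hn => TokenSliding.minMatchingCost_le_of_reachN G hG hc hn⟩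

/-- On a connected graph, the minimum number of token moves transforming one
placement of `k` identical tokens into another equals the minimum, over all
bijections `σ` between the two occupied sets, of the total graph distance moved. -/
theorem token_moves_min_eq_min_matching {V : Type} [Fintype V] [DecidableEq V]
    (G : SimpleGraph V) (hG : G.Connected) (k : ℕ) (U W : Finset V)
    (hU : U.card = k) (hW : W.card = k) :
    IsLeast {n : ℕ | ReachN (TokenMove G) n U W}
      (sInf {m : ℕ | ∃ σ : {x // x ∈ U} ≃ {x // x ∈ W},
        m = ∑ u : {x // x ∈ U}, G.dist u.1 (σ u).1}) :=
  token_moves_min_eq_min_matching_general G hG k U W hU hW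
end

section
/- If G is a disconnected graph and k ≤ |V(G)|, then two configurations of k identical tokens on G (k-subsets of vertices) are connected by token slides along edges if and only if they place the same number of tokens on each connected component of G. In particular, for a connected graph G, any two k-subsets of V(G) with k < |V(G)| are connected by token slides. -/
/-!
Every move keeps a token inside its connected component, so the number of tokens on each
component is invariant. Conversely, if two configurations `U ≠ W` agree on every component, some
`u ∈ U \ W` shares its component with some `w ∈ W \ U`, and a token on `u` can be exchanged for
one on the vacant `w` by pushing the tokens along a walk from `u` to `w`; this shrinks `U \ W`.
For a connected graph the only count is the total number of tokens.
-/

open Finset Relation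

namespace SimpleGraph

variable {V : Type} [DecidableEq V] {G : SimpleGraph V}

theorem exists_mem_sdiff_reachable_of_card_filter_eq [DecidableEq G.ConnectedComponent]
    {U W : Finset V} (h : ∀ C : G.ConnectedComponent,
      (U.filter fun v => G.connectedComponentMk v = C).card =
        (W.filter fun v => G.connectedComponentMk v = C).card)
    {u : V} (hu : u ∈ U) (huW : u ∉ W) : ∃ w ∈ W, w ∉ U ∧ G.Reachable u w := by
  set C := G.connectedComponentMk u
  have huC : u ∈ U.filter (G.connectedComponentMk · = C) \
      W.filter (G.connectedComponentMk · = C) := by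
    simp [hu, huW, C]
  obtain ⟨w, hw⟩ := card_pos.1 <| card_sdiff_comm (h C) ▸ card_pos.2 ⟨u, huC⟩
  simp only [mem_sdiff, mem_filter, not_and] at hw
  exact ⟨w, hw.1.1, fun hwU => hw.2 hwU hw.1.2, ConnectedComponent.exact hw.1.2.symm⟩

end SimpleGraph

namespace TokenMove

variable {V : Type} [DecidableEq V] {G : SimpleGraph V}

theorem card_filter_eq {p : V → Prop} [DecidablePred p]
    (hp : ∀ u v, G.Adj u v → (p u ↔ p v)) {U U' : Finset V} (h : TokenMove G U U') :
    (U'.filter p).card = (U.filter p).card := by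
  obtain ⟨u, v, hu, hv, huv, rfl⟩ := h
  rw [filter_insert, filter_erase]
  by_cases hpv : p v
  · have hu' : u ∈ U.filter p := mem_filter.2 ⟨hu, (hp u v huv).2 hpv⟩
    have hv' : v ∉ (U.filter p).erase u := fun h => hv (mem_filter.1 (mem_of_mem_erase h)).1
    rw [if_pos hpv, card_insert_of_notMem hv', card_erase_add_one hu']
  · have hu' : u ∉ U.filter p := fun h => hpv ((hp u v huv).1 (mem_filter.1 h).2)
    rw [if_neg hpv, erase_eq_of_notMem hu']

theorem reflTransGen_card_filter_eq {p : V → Prop} [DecidablePred p]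
    (hp : ∀ u v, G.Adj u v → (p u ↔ p v)) {U U' : Finset V}
    (h : ReflTransGen (TokenMove G) U U') : (U'.filter p).card = (U.filter p).card := by
  induction h with
  | refl => rfl
  | tail _ hstep ih => exact (card_filter_eq hp hstep).trans ih

/-- Induction along a walk `u, x, …, w`: if `x` is vacant, slide `u` to `x` and recurse; if `x` is
occupied, first exchange `x` for `w` recursively, then slide `u` into the vacated `x`. -/
theorem reflTransGen_insert_erase {u w : V} (h : G.Reachable u w) {U : Finset V} (hu : u ∈ U)
    (hw : w ∉ U) : ReflTransGen (TokenMove G) U (insert w (U.erase u)) := by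
  obtain ⟨p⟩ := h
  induction p generalizing U with
  | nil => exact absurd hu hw
  | @cons u x w hux q ih =>
    by_cases hx : x ∈ U
    · have hxw : x ≠ w := fun h => hw (h ▸ hx)
      refine (ih hx hw).tail ⟨u, x, ?_, ?_, hux, ?_⟩
      · simp [hu, hux.ne]
      · simp [hxw]
      · ext y
        simp only [mem_insert, mem_erase]
        have := hux.ne
        grind
    · by_cases hxw : x = w
      · subst hxw
        exact .single ⟨u, x, hu, hx, hux, rfl⟩
      refine ReflTransGen.head ⟨u, x, hu, hx, hux, rfl⟩ ?_
      have hw' : w ∉ insert x (U.erase u) := by simp [hw, Ne.symm hxw]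
      simpa only [erase_insert (fun h => hx (mem_of_mem_erase h))] using
        ih (mem_insert_self x _) hw'

theorem card_filter_component_eq_of_reflTransGen [DecidableEq G.ConnectedComponent]
    {U W : Finset V} (h : ReflTransGen (TokenMove G) U W) (C : G.ConnectedComponent) :
    (U.filter fun v => G.connectedComponentMk v = C).card =
      (W.filter fun v => G.connectedComponentMk v = C).card := by
  refine (reflTransGen_card_filter_eq (fun u v huv => ?_) h).symm
  rw [SimpleGraph.ConnectedComponent.connectedComponentMk_eq_of_adj huv]

theorem reflTransGen_iff [DecidableEq G.ConnectedComponent] {U W : Finset V} :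
    ReflTransGen (TokenMove G) U W ↔ ∀ C : G.ConnectedComponent,
      (U.filter fun v => G.connectedComponentMk v = C).card =
        (W.filter fun v => G.connectedComponentMk v = C).card := by
  refine ⟨card_filter_component_eq_of_reflTransGen, fun h => ?_⟩
  induction hn : (U \ W).card generalizing U with
  | zero =>
    have hUW : U ⊆ W := sdiff_eq_empty_iff_subset.1 (card_eq_zero.1 hn)
    suffices W ⊆ U from subset_antisymm hUW this ▸ .refl
    intro w hw
    by_contra hwU
    obtain ⟨u, hu, huW, -⟩ :=
      SimpleGraph.exists_mem_sdiff_reachable_of_card_filter_eq (fun C => (h C).symm) hw hwU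
    exact huW (hUW hu)
  | succ n ih =>
    obtain ⟨u, hu⟩ : (U \ W).Nonempty := card_pos.1 (by omega)
    obtain ⟨huU, huW⟩ := mem_sdiff.1 hu
    obtain ⟨w, hw, hwU, huw⟩ :=
      SimpleGraph.exists_mem_sdiff_reachable_of_card_filter_eq h huU huW
    have hstep := reflTransGen_insert_erase huw huU hwU
    refine hstep.trans (ih (fun C => ?_) ?_)
    · rw [← h C, card_filter_component_eq_of_reflTransGen hstep C]
    · rw [insert_sdiff_of_mem _ hw, erase_sdiff_comm, card_erase_of_mem hu, hn,
        Nat.add_sub_cancel]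

theorem reflTransGen_of_preconnected (hG : G.Preconnected) {U W : Finset V}
    (h : U.card = W.card) : ReflTransGen (TokenMove G) U W := by
  classical
  have := hG.subsingleton_connectedComponent
  refine reflTransGen_iff.2 fun C => ?_
  rwa [filter_true_of_mem fun v _ => Subsingleton.elim _ C,
    filter_true_of_mem fun v _ => Subsingleton.elim _ C]

end TokenMove

open scoped Classical in
theorem token_reachability_components_general {V : Type} [Fintype V] [DecidableEq V]
    (G : SimpleGraph V) (k : ℕ) :
    (¬ G.Connected → ∀ U W : Finset V, U.card = k → W.card = k →
      (Relation.ReflTransGen (TokenMove G) U W ↔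
        ∀ C : G.ConnectedComponent,
          (U.filter fun v => G.connectedComponentMk v = C).card =
            (W.filter fun v => G.connectedComponentMk v = C).card)) ∧
    (G.Connected → k < Fintype.card V → ∀ U W : Finset V, U.card = k → W.card = k →
      Relation.ReflTransGen (TokenMove G) U W) :=
  ⟨fun _ _ _ _ _ => TokenMove.reflTransGen_iff, fun hG _ _ _ hU hW =>
    TokenMove.reflTransGen_of_preconnected hG.preconnected (hU.trans hW.symm)⟩

open scoped Classical in
/-- For a disconnected graph, two placements of `k` identical tokens are connected by
token slides iff they put the same number of tokens on each connected component; for a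
connected graph, any two placements of `k < |V|` tokens are connected by token slides. -/
theorem token_reachability_components {V : Type} [Fintype V] [DecidableEq V]
    (G : SimpleGraph V) (k : ℕ) (hk : k ≤ Fintype.card V) :
    (¬ G.Connected → ∀ U W : Finset V, U.card = k → W.card = k →
      (Relation.ReflTransGen (TokenMove G) U W ↔
        ∀ C : G.ConnectedComponent,
          (U.filter fun v => G.connectedComponentMk v = C).card =
            (W.filter fun v => G.connectedComponentMk v = C).card)) ∧
    (G.Connected → k < Fintype.card V → ∀ U W : Finset V, U.card = k → W.card = k →
      Relation.ReflTransGen (TokenMove G) U W) :=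
  token_reachability_components_general G k
end

section
/- Let G be a connected weighted graph in which the edge weights are all distinct. Then G has a unique minimum spanning tree; consequently the minimum-spanning-tree reconfiguration graph (vertices: minimum spanning trees; edges: single edge exchanges) is trivially connected. More generally, for arbitrary positive edge weights, any minimum spanning tree of G can be transformed into any other by exchanging one edge at a time so that each intermediate tree is also a minimum spanning tree. -/
/-!
Deleting an edge `e = s(a, b)` from a spanning tree `T` splits it into the vertices reachable from
`a` and those reachable from `b`. The `T'`-path from `a` to `b` crosses this cut along some edge
`f`; then both `T - e + f` and `T' - f + e` are spanning trees. Comparing weights in the two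
exchanges of a pair of minimum spanning trees forces `w e = w f`. With injective weights this
gives `e = f`, impossible, so the minimum spanning tree is unique; in general, `T - e + f` is a
minimum spanning tree closer to `T'`, and induction on `#(T \ T')` gives the exchange sequence.
-/

def IsSpanningTree {V : Type} [Fintype V] (G : SimpleGraph V) (T : Finset (Sym2 V)) : Prop :=
  ↑T ⊆ G.edgeSet ∧ (SimpleGraph.fromEdgeSet (↑T : Set (Sym2 V))).IsTree

def IsMST {V : Type} [Fintype V] (G : SimpleGraph V) (w : Sym2 V → ℝ)
    (T : Finset (Sym2 V)) : Prop :=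
  IsSpanningTree G T ∧ ∀ T' : Finset (Sym2 V), IsSpanningTree G T' →
    ∑ e ∈ T, w e ≤ ∑ e ∈ T', w e

def MSTExchangeStep {V : Type} [Fintype V] [DecidableEq V] (G : SimpleGraph V)
    (w : Sym2 V → ℝ) (T T' : Finset (Sym2 V)) : Prop :=
  IsMST G w T ∧ IsMST G w T' ∧
    ∃ e f : Sym2 V, e ∈ T ∧ f ∉ T ∧ T' = insert f (T.erase e)

namespace SimpleGraph

variable {V : Type*} {G : SimpleGraph V}

theorem Preconnected.reachable_deleteEdges_or (hG : G.Preconnected) (u v z : V) :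
    (G.deleteEdges {s(u, v)}).Reachable u z ∨ (G.deleteEdges {s(u, v)}).Reachable v z := by
  classical
  obtain ⟨P, hP⟩ := (hG z u).exists_isPath
  by_cases huvP : s(u, v) ∈ P.edges
  · have hvP := P.snd_mem_support_of_mem_edges huvP
    have huP₁ := Walk.endpoint_notMem_support_takeUntil hP hvP (P.adj_of_mem_edges huvP).ne
    refine .inr (.symm ⟨(P.takeUntil v hvP).toDeleteEdges _ fun e he => ?_⟩)
    rintro rfl
    exact huP₁ ((P.takeUntil v hvP).fst_mem_support_of_mem_edges he)
  · exact .inl (.symm ⟨P.toDeleteEdges _ fun e he => by rintro rfl; exact huvP he⟩)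

theorem Connected.deleteEdges_sup_edge_of_not_reachable {u v x y : V} (hG : G.Connected)
    (hxy : ¬(G.deleteEdges {s(u, v)}).Reachable x y) :
    (G.deleteEdges {s(u, v)} ⊔ edge x y).Connected := by
  set K := G.deleteEdges {s(u, v)}
  -- every vertex is `K`-reachable from `u` or `v`, and `x`, `y` lie on different sides
  have hK : K ≤ K ⊔ edge x y := le_sup_left
  have hxy' : (K ⊔ edge x y).Reachable x y :=
    Adj.reachable (Or.inr ((edge_adj ..).mpr ⟨.inl ⟨rfl, rfl⟩, fun h => hxy (h ▸ .rfl)⟩))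
  have huv : (K ⊔ edge x y).Reachable u v := by
    rcases hG.preconnected.reachable_deleteEdges_or u v x with hx | hx <;>
    rcases hG.preconnected.reachable_deleteEdges_or u v y with hy | hy
    · exact absurd (hx.symm.trans hy) hxy
    · exact (hx.mono hK).trans (hxy'.trans (hy.mono hK).symm)
    · exact (hy.mono hK).trans (hxy'.symm.trans (hx.mono hK).symm)
    · exact absurd (hx.symm.trans hy) hxy
  refine (connected_iff_exists_forall_reachable _).2 ⟨u, fun z => ?_⟩
  rcases hG.preconnected.reachable_deleteEdges_or u v z with hz | hz
  · exact hz.mono hK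
  · exact huv.trans (hz.mono hK)

theorem IsTree.deleteEdges_sup_edge_of_not_reachable {u v x y : V} (hG : G.IsTree)
    (hxy : ¬(G.deleteEdges {s(u, v)}).Reachable x y) :
    (G.deleteEdges {s(u, v)} ⊔ edge x y).IsTree :=
  ⟨hG.connected.deleteEdges_sup_edge_of_not_reachable hxy,
    (hG.isAcyclic.anti (deleteEdges_le _)).sup_edge_of_not_reachable hxy⟩

theorem IsAcyclic.not_reachable_deleteEdges_of_mem_edges {u v : V} {e : Sym2 V}
    (hG : G.IsAcyclic) {p : G.Walk u v} (hp : p.IsPath) (he : e ∈ p.edges) :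
    ¬(G.deleteEdges {e}).Reachable u v := by
  classical
  -- a walk avoiding `e` would shorten to a second path from `u` to `v`
  rintro ⟨q⟩
  let q' : G.Walk u v := q.map (.ofLE (deleteEdges_le _))
  have hq : q'.toPath = ⟨p, hp⟩ := (hG.subsingleton_path u v).elim _ _
  have heq' : e ∈ q'.edges := q'.edges_toPath_subset_edges (congrArg Subtype.val hq ▸ he)
  simp only [q', Walk.edges_map, List.mem_map, Hom.ofLE_apply, Sym2.map_id', id] at heq'
  obtain ⟨e', he', rfl⟩ := heq'
  simpa using q.edges_subset_edgeSet he'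

theorem IsTree.exists_exchange {T T' : SimpleGraph V} (hT : T.IsTree) (hT' : T'.IsTree)
    {a b : V} (hab : T.Adj a b) (hab' : ¬T'.Adj a b) :
    ∃ x y, T'.Adj x y ∧ ¬T.Adj x y ∧ (T.deleteEdges {s(a, b)} ⊔ edge x y).IsTree ∧
      (T'.deleteEdges {s(x, y)} ⊔ edge a b).IsTree := by
  set K := T.deleteEdges {s(a, b)}
  have hKab : ¬K.Reachable a b := isAcyclic_iff_forall_adj_isBridge.mp hT.isAcyclic hab
  obtain ⟨P, hP⟩ := hT'.connected.exists_isPath a b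
  obtain ⟨d, hdP, hxS, hyS⟩ := P.exists_boundary_dart {z | K.Reachable a z} .rfl hKab
  obtain ⟨⟨x, y⟩, hxy⟩ := d
  have hKxy : ¬K.Reachable x y := fun h => hyS (Set.mem_ofPred.mp hxS |>.trans h)
  have hne : s(x, y) ≠ s(a, b) := fun h => hab' (h ▸ hxy : s(a, b) ∈ T'.edgeSet)
  have hTxy : ¬T.Adj x y := fun hTxy => hKxy ((deleteEdges_adj ..).mpr ⟨hTxy, hne⟩).reachable
  have hT'ab : ¬(T'.deleteEdges {s(x, y)}).Reachable a b :=
    hT'.isAcyclic.not_reachable_deleteEdges_of_mem_edges hP (List.mem_map_of_mem hdP)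
  exact ⟨x, y, hxy, hTxy, hT.deleteEdges_sup_edge_of_not_reachable hKxy,
    hT'.deleteEdges_sup_edge_of_not_reachable hT'ab⟩

theorem fromEdgeSet_insert_erase [DecidableEq V] (T : Finset (Sym2 V)) (e : Sym2 V) (x y : V) :
    fromEdgeSet ↑(insert s(x, y) (T.erase e)) =
      (fromEdgeSet ↑T).deleteEdges {e} ⊔ edge x y := by
  rw [Finset.coe_insert, Finset.coe_erase, Set.insert_eq, fromEdgeSet_union,
    deleteEdges_fromEdgeSet, sup_comm, edge]

end SimpleGraph

theorem Finset.sum_insert_erase {ι M : Type*} [DecidableEq ι] [AddCommGroup M] {s : Finset ι}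
    {a b : ι} (f : ι → M) (ha : a ∈ s) (hb : b ∉ s) :
    ∑ i ∈ insert b (s.erase a), f i = ∑ i ∈ s, f i - f a + f b := by
  rw [Finset.sum_insert fun h => hb (Finset.mem_of_mem_erase h), Finset.sum_erase_eq_sub ha,
    add_comm]

open SimpleGraph

variable {V : Type} [Fintype V] {G : SimpleGraph V} {T T' : Finset (Sym2 V)}

theorem IsSpanningTree.card_add_one (hT : IsSpanningTree G T) : T.card + 1 = Fintype.card V := by
  have h := (isTree_iff_connected_and_card.mp hT.2).2
  have hT_diag : Disjoint (↑T : Set (Sym2 V)) Sym2.diagSet :=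
    Set.disjoint_left.mpr fun _ he => G.not_isDiag_of_mem_edgeSet (hT.1 he)
  rwa [edgeSet_fromEdgeSet, sdiff_eq_left.mpr hT_diag, Nat.card_coe_set_eq, Set.ncard_coe_finset,
    Nat.card_eq_fintype_card] at h

theorem IsSpanningTree.eq_of_subset (hT : IsSpanningTree G T) (hT' : IsSpanningTree G T')
    (h : T ⊆ T') : T = T' :=
  Finset.eq_of_subset_of_card_le h (by have := hT.card_add_one; have := hT'.card_add_one; omega)

variable [DecidableEq V]

theorem IsSpanningTree.exists_exchange (hT : IsSpanningTree G T) (hT' : IsSpanningTree G T')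
    {e : Sym2 V} (he : e ∈ T) (he' : e ∉ T') :
    ∃ f ∈ T', f ∉ T ∧ IsSpanningTree G (insert f (T.erase e)) ∧
      IsSpanningTree G (insert e (T'.erase f)) := by
  obtain ⟨a, b⟩ := e
  have hab : (fromEdgeSet ↑T).Adj a b := (fromEdgeSet_adj _).mpr ⟨he, G.ne_of_adj (hT.1 he)⟩
  have hab' : ¬(fromEdgeSet ↑T').Adj a b := fun h => he' h.1
  obtain ⟨x, y, hxy', hxy, hT₁, hT₁'⟩ := hT.2.exists_exchange hT'.2 hab hab'
  rw [← fromEdgeSet_insert_erase] at hT₁ hT₁'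
  refine ⟨s(x, y), hxy'.1, fun h => hxy ⟨h, hxy'.2⟩, ⟨?_, hT₁⟩, ⟨?_, hT₁'⟩⟩
  · rw [Finset.coe_insert, Finset.coe_erase, Set.insert_subset_iff]
    exact ⟨hT'.1 hxy'.1, Set.sdiff_subset.trans hT.1⟩
  · rw [Finset.coe_insert, Finset.coe_erase, Set.insert_subset_iff]
    exact ⟨hT.1 he, Set.sdiff_subset.trans hT'.1⟩

variable {w : Sym2 V → ℝ}

theorem IsMST.exists_exchange (hT : IsMST G w T) (hT' : IsMST G w T') {e : Sym2 V}
    (he : e ∈ T) (he' : e ∉ T') :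
    ∃ f ∈ T', f ∉ T ∧ w e = w f ∧ IsMST G w (insert f (T.erase e)) := by
  obtain ⟨f, hf', hf, hT₁, hT₁'⟩ := hT.1.exists_exchange hT'.1 he he'
  have h₁ := hT.2 _ hT₁
  have h₂ := hT'.2 _ hT₁'
  rw [Finset.sum_insert_erase w he hf] at h₁
  rw [Finset.sum_insert_erase w hf' he'] at h₂
  have hwef : w e = w f := by linarith
  refine ⟨f, hf', hf, hwef, hT₁, fun S hS => ?_⟩
  rw [Finset.sum_insert_erase w he hf, hwef, sub_add_cancel]
  exact hT.2 S hS

theorem IsMST.eq_of_injOn (hT : IsMST G w T) (hT' : IsMST G w T')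
    (hw : Set.InjOn w G.edgeSet) : T = T' := by
  by_contra hne
  obtain ⟨e, he, he'⟩ := Finset.not_subset.mp fun h => hne (hT.1.eq_of_subset hT'.1 h)
  obtain ⟨f, hf', hf, hwef, -⟩ := hT.exists_exchange hT' he he'
  exact hf (hw (hT.1.1 he) (hT'.1.1 hf') hwef ▸ he)

theorem IsMST.reflTransGen_mstExchangeStep (hT : IsMST G w T) (hT' : IsMST G w T') :
    Relation.ReflTransGen (MSTExchangeStep G w) T T' := by
  induction h : (T \ T').card generalizing T with
  | zero =>
    rw [hT.1.eq_of_subset hT'.1 (Finset.sdiff_eq_empty_iff_subset.mp (Finset.card_eq_zero.mp h))]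
  | succ n ih =>
    obtain ⟨e, heT⟩ : (T \ T').Nonempty := Finset.card_pos.mp (by omega)
    obtain ⟨he, he'⟩ := Finset.mem_sdiff.mp heT
    obtain ⟨f, hf', hf, -, hT₁⟩ := hT.exists_exchange hT' he he'
    refine .head ⟨hT, hT₁, e, f, he, hf, rfl⟩ (ih hT₁ ?_)
    rw [Finset.insert_sdiff_of_mem _ hf', Finset.erase_sdiff_comm, Finset.card_erase_of_mem heT, h,
      Nat.add_sub_cancel]

theorem mst_unique_and_reconfiguration_general {V : Type} [Fintype V] [DecidableEq V]
    (G : SimpleGraph V) :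
    (∀ w : Sym2 V → ℝ, Set.InjOn w G.edgeSet →
      ∀ T T' : Finset (Sym2 V), IsMST G w T → IsMST G w T' → T = T') ∧
    (∀ w : Sym2 V → ℝ, (∀ e ∈ G.edgeSet, 0 < w e) →
      ∀ T T' : Finset (Sym2 V), IsMST G w T → IsMST G w T' →
        Relation.ReflTransGen (MSTExchangeStep G w) T T') :=
  ⟨fun _ hw _ _ hT hT' => hT.eq_of_injOn hT' hw,
    fun _ _ _ _ hT hT' => hT.reflTransGen_mstExchangeStep hT'⟩

/-- Distinct weights give a unique MST; and for arbitrary positive weights any MST can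
be transformed into any other by single edge exchanges through MSTs. -/
theorem mst_unique_and_reconfiguration {V : Type} [Fintype V] [DecidableEq V]
    (G : SimpleGraph V) (hG : G.Connected) :
    (∀ w : Sym2 V → ℝ, Set.InjOn w G.edgeSet →
      ∀ T T' : Finset (Sym2 V), IsMST G w T → IsMST G w T' → T = T') ∧
    (∀ w : Sym2 V → ℝ, (∀ e ∈ G.edgeSet, 0 < w e) →
      ∀ T T' : Finset (Sym2 V), IsMST G w T → IsMST G w T' →
        Relation.ReflTransGen (MSTExchangeStep G w) T T') :=
  mst_unique_and_reconfiguration_general G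
end

section
/- Let G be a graph and v a vertex of degree at most k − 2 such that G − v is k-mixing. Then G is k-mixing. -/
/-!
Run a recolouring sequence of `G - v` inside `G`, keeping the colour of `v` fixed. A step that
recolours a vertex `u` can only be blocked by `v` itself, and then, before that step, `v` is moved to
a colour different from the new colour of `u` and from the colours of its at most `k - 2`
neighbours. At the end, `v` is recoloured directly to its target colour.
-/

section

variable {V : Type} {G : SimpleGraph V} {k : ℕ}

theorem IsProperColoring.induce {c : V → Fin k} (hc : IsProperColoring G c) (s : Set V) :
    IsProperColoring (G.induce s) (fun w => c w) :=
  fun _ _ h => hc h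

theorem reflTransGen_recolStep_of_eq_of_ne {c c' : V → Fin k} (v : V)
    (hc : IsProperColoring G c) (hc' : IsProperColoring G c')
    (h : ∀ w, w ≠ v → c w = c' w) : Relation.ReflTransGen (RecolStep G) c c' := by
  classical
  by_cases hv : c v = c' v
  · obtain rfl : c = c' := funext fun w => if hw : w = v then hw ▸ hv else h w hw
    exact .refl
  · exact .single ⟨hc, hc', v, hv, h⟩

theorem exists_ne_forall_adj_ne [Fintype V] [DecidableRel G.Adj] {v : V}
    (hdeg : G.degree v + 2 ≤ k) (f : V → Fin k) (x : Fin k) :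
    ∃ b, b ≠ x ∧ ∀ w, G.Adj v w → f w ≠ b := by
  classical
  let used : Finset (Fin k) := insert x ((G.neighborFinset v).image f)
  have hused : used.card < k :=
    calc used.card ≤ ((G.neighborFinset v).image f).card + 1 := Finset.card_insert_le _ _
      _ ≤ G.degree v + 1 := by
        rw [← G.card_neighborFinset_eq_degree]; exact Nat.succ_le_succ Finset.card_image_le
      _ < k := by omega
  obtain ⟨b, hb⟩ : usedᶜ.Nonempty := by
    rw [← Finset.card_pos, Finset.card_compl, Fintype.card_fin]; omega
  simp only [used, Finset.mem_compl, Finset.mem_insert, Finset.mem_image,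
    SimpleGraph.mem_neighborFinset, not_or, not_exists, not_and] at hb
  exact ⟨b, hb.1, hb.2⟩

variable [DecidableEq V] (v : V)

def extendAt (d : {w : V | w ≠ v} → Fin k) (a : Fin k) : V → Fin k :=
  fun w => if h : w = v then a else d ⟨w, h⟩

variable {v}

@[simp]
theorem extendAt_self (d : {w : V | w ≠ v} → Fin k) (a : Fin k) : extendAt v d a v = a :=
  dif_pos rfl

theorem extendAt_of_ne (d : {w : V | w ≠ v} → Fin k) (a : Fin k) {w : V} (h : w ≠ v) :
    extendAt v d a w = d ⟨w, h⟩ :=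
  dif_neg h

@[simp]
theorem extendAt_val (d : {w : V | w ≠ v} → Fin k) (a : Fin k) (w : {w : V | w ≠ v}) :
    extendAt v d a w = d w :=
  extendAt_of_ne d a w.2

theorem extendAt_restrict (c : V → Fin k) : extendAt v (fun w => c w) (c v) = c :=
  funext fun w => if h : w = v then h ▸ extendAt_self _ _ else extendAt_of_ne _ _ h

theorem isProperColoring_extendAt {d : {w : V | w ≠ v} → Fin k} {a : Fin k}
    (hd : IsProperColoring (G.induce {w | w ≠ v}) d)
    (ha : ∀ w : {w : V | w ≠ v}, G.Adj v w → d w ≠ a) :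
    IsProperColoring G (extendAt v d a) := by
  intro u w huw
  by_cases hu : u = v
  · subst hu
    have hw : w ≠ u := huw.ne.symm
    simpa [extendAt_of_ne d a hw, eq_comm] using ha ⟨w, hw⟩ huw
  by_cases hw : w = v
  · subst hw
    simpa [extendAt_of_ne d a hu] using ha ⟨u, hu⟩ huw.symm
  rw [extendAt_of_ne d a hu, extendAt_of_ne d a hw]
  exact hd (show (G.induce {w | w ≠ v}).Adj ⟨u, hu⟩ ⟨w, hw⟩ from huw)

theorem RecolStep.extendAt {d d' : {w : V | w ≠ v} → Fin k} {a : Fin k}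
    (hstep : RecolStep (G.induce {w | w ≠ v}) d d')
    (hd : IsProperColoring G (extendAt v d a)) (hd' : IsProperColoring G (extendAt v d' a)) :
    RecolStep G (extendAt v d a) (extendAt v d' a) := by
  obtain ⟨-, -, u, hu, hother⟩ := hstep
  refine ⟨hd, hd', u, by simpa using hu, fun w hw => ?_⟩
  by_cases hwv : w = v
  · subst hwv; simp
  · rw [extendAt_of_ne d a hwv, extendAt_of_ne d' a hwv]
    exact hother ⟨w, hwv⟩ (fun h => hw (congrArg Subtype.val h))

variable [Fintype V] [DecidableRel G.Adj]

theorem exists_extendAt_of_recolStep (hdeg : G.degree v + 2 ≤ k)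
    {d d' : {w : V | w ≠ v} → Fin k} (hstep : RecolStep (G.induce {w | w ≠ v}) d d')
    {a : Fin k} (ha : IsProperColoring G (extendAt v d a)) :
    ∃ b, IsProperColoring G (extendAt v d' b) ∧
      Relation.ReflTransGen (RecolStep G) (extendAt v d a) (extendAt v d' b) := by
  obtain ⟨hd, hd', u, hu, hother⟩ := hstep
  obtain ⟨b, hbu, hb⟩ := exists_ne_forall_adj_ne hdeg (extendAt v d a) (d' u)
  have hbd : IsProperColoring G (extendAt v d b) :=
    isProperColoring_extendAt hd fun w hw => by simpa using hb w hw
  have hbd' : IsProperColoring G (extendAt v d' b) := by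
    refine isProperColoring_extendAt hd' fun w hw => ?_
    by_cases hwu : w = u
    · exact hwu ▸ hbu.symm
    · simpa [← hother w hwu] using hb w hw
  refine ⟨b, hbd', ?_⟩
  exact (reflTransGen_recolStep_of_eq_of_ne v ha hbd fun w hw => by
      simp [extendAt_of_ne _ _ hw]).tail
    (RecolStep.extendAt ⟨hd, hd', u, hu, hother⟩ hbd hbd')

theorem exists_extendAt_of_reflTransGen (hdeg : G.degree v + 2 ≤ k)
    {d d' : {w : V | w ≠ v} → Fin k}
    (hpath : Relation.ReflTransGen (RecolStep (G.induce {w | w ≠ v})) d d')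
    {a : Fin k} (ha : IsProperColoring G (extendAt v d a)) :
    ∃ b, IsProperColoring G (extendAt v d' b) ∧
      Relation.ReflTransGen (RecolStep G) (extendAt v d a) (extendAt v d' b) := by
  induction hpath with
  | refl => exact ⟨a, ha, .refl⟩
  | tail _ hstep ih =>
    obtain ⟨b, hb, hpath⟩ := ih
    obtain ⟨b', hb', hpath'⟩ := exists_extendAt_of_recolStep hdeg hstep hb
    exact ⟨b', hb', hpath.trans hpath'⟩

end

theorem mixing_inductive_step_general {V : Type} [Fintype V]
    (G : SimpleGraph V) [DecidableRel G.Adj] (k : ℕ) (v : V)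
    (hdeg : G.degree v + 2 ≤ k)
    (hmix : IsMixing (G.induce {w : V | w ≠ v}) k) : IsMixing G k := by
  classical
  intro c c' hc hc'
  have hpath := hmix _ _ (hc.induce {w | w ≠ v}) (hc'.induce {w | w ≠ v})
  rw [← extendAt_restrict (v := v) c] at hc
  obtain ⟨b, hb, hpath⟩ := exists_extendAt_of_reflTransGen hdeg hpath hc
  rw [← extendAt_restrict (v := v) c, ← extendAt_restrict (v := v) c']
  refine hpath.trans (reflTransGen_recolStep_of_eq_of_ne v hb ?_ fun w hw => ?_)
  · rwa [extendAt_restrict]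
  · simp [extendAt_of_ne _ _ hw]

/-- If `v` has degree at most `k - 2` and `G - v` is `k`-mixing, then `G` is
`k`-mixing. -/
theorem mixing_inductive_step {V : Type} [Fintype V] [DecidableEq V]
    (G : SimpleGraph V) [DecidableRel G.Adj] (k : ℕ) (v : V)
    (hdeg : G.degree v + 2 ≤ k)
    (hmix : IsMixing (G.induce {w : V | w ≠ v}) k) : IsMixing G k :=
  mixing_inductive_step_general G k v hdeg hmix
end
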